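/- The sums defining Φ∗Ψ and Φ∗f are finite and independent of the choice of coset representatives; (H(G,K,V), ∗) is an associative unital C-algebra; for Φ ∈ H(G,K,V) and f ∈ ind_K^G V the function Φ∗f again lies in ind_K^G V; and the map Φ ↦ (f ↦ Φ∗f) is an isomorphism of C-algebras from H(G,K,V) onto End_{C[G]}(ind_K^G V), where endomorphisms are multiplied by (b·b')(f) = b(b'(f)). -/

import Mathlib

open scoped Classical

noncomputable section
namespace Paper

variable {C : Type} [Field C] {G : Type} [Group G]

/-- The compactly induced module `ind_K^G V`, as a `C`-submodule of `G → V`. -/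
def cInd (K : Subgroup G) {V : Type} [AddCommGroup V] [Module C V]
    (ρ : Representation C ↥K V) : Submodule C (G → V) where
  carrier := {f | (∀ (k : ↥K) (x : G), f (↑k * x) = ρ k (f x)) ∧
    ∃ S : Finset G, ∀ x : G, f x ≠ 0 → ∃ s ∈ S, ∃ k ∈ K, x = k * s}
  add_mem' := by
    rintro a b ⟨ha1, Sa, ha2⟩ ⟨hb1, Sb, hb2⟩
    refine ⟨fun k x => by simp [ha1 k x, hb1 k x], Sa ∪ Sb, fun x hx => ?_⟩
    by_cases h : a x ≠ 0
    · obtain ⟨s, hs, k, hk, h'⟩ := ha2 x h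
      exact ⟨s, Finset.mem_union_left _ hs, k, hk, h'⟩
    · push_neg at h
      have hbx : b x ≠ 0 := by
        intro hb0; apply hx; simp only [Pi.add_apply, h, hb0, add_zero]
      obtain ⟨s, hs, k, hk, h'⟩ := hb2 x hbx
      exact ⟨s, Finset.mem_union_right _ hs, k, hk, h'⟩
  zero_mem' := ⟨fun k x => by simp, ∅, fun x hx => absurd rfl hx⟩
  smul_mem' := by
    rintro c a ⟨ha1, Sa, ha2⟩
    refine ⟨fun k x => by simp [ha1 k x], Sa, fun x hx => ?_⟩
    refine ha2 x (fun h0 => hx ?_)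
    simp only [Pi.smul_apply, h0, smul_zero]

/-- Hecke algebra H(G,K,V) as a submodule of `G → End V`. -/
def Hecke (K : Subgroup G) {V : Type} [AddCommGroup V] [Module C V]
    (ρ : Representation C ↥K V) : Submodule C (G → Module.End C V) where
  carrier := {Φ | (∀ (k k' : ↥K) (g : G), Φ (↑k * g * ↑k') = ρ k * Φ g * ρ k') ∧
    ∃ S : Finset G, ∀ g : G, Φ g ≠ 0 → ∃ s ∈ S, ∃ k ∈ K, ∃ k' ∈ K, g = k * s * k'}
  add_mem' := by
    rintro a b ⟨ha1, Sa, ha2⟩ ⟨hb1, Sb, hb2⟩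
    refine ⟨fun k k' g => by simp [ha1 k k' g, hb1 k k' g, mul_add, add_mul],
      Sa ∪ Sb, fun g hg => ?_⟩
    by_cases h : a g ≠ 0
    · obtain ⟨s, hs, hrest⟩ := ha2 g h
      exact ⟨s, Finset.mem_union_left _ hs, hrest⟩
    · push_neg at h
      have hbg : b g ≠ 0 := by
        intro hb0; apply hg; simp only [Pi.add_apply, h, hb0, add_zero]
      obtain ⟨s, hs, hrest⟩ := hb2 g hbg
      exact ⟨s, Finset.mem_union_right _ hs, hrest⟩
  zero_mem' := ⟨fun k k' g => by simp, ∅, fun g hg => absurd rfl hg⟩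
  smul_mem' := by
    rintro c a ⟨ha1, Sa, ha2⟩
    refine ⟨fun k k' g => by
      simp only [Pi.smul_apply, ha1 k k' g, mul_smul_comm, smul_mul_assoc],
      Sa, fun g hg => ?_⟩
    refine ha2 g (fun h0 => hg ?_)
    simp only [Pi.smul_apply, h0, smul_zero]

/-- Convolution product on functions `G → End V`, with respect to `K`. -/
def conv (K : Subgroup G) {V : Type} [AddCommGroup V] [Module C V]
    (Φ Ψ : G → Module.End C V) : G → Module.End C V :=
  fun g => ∑ᶠ q : G ⧸ K, Φ (Quotient.out q) * Ψ ((Quotient.out q)⁻¹ * g)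

/-- Convolution action of functions `G → End V` on functions `G → V`. -/
def convAct (K : Subgroup G) {V : Type} [AddCommGroup V] [Module C V]
    (Φ : G → Module.End C V) (f : G → V) : G → V :=
  fun g => ∑ᶠ q : G ⧸ K, Φ (Quotient.out q) (f ((Quotient.out q)⁻¹ * g))

/-- The unit of the Hecke algebra. -/
def heckeUnit (K : Subgroup G) {V : Type} [AddCommGroup V] [Module C V]
    (ρ : Representation C ↥K V) : G → Module.End C V :=
  fun g => if h : g ∈ K then (ρ ⟨g, h⟩ : Module.End C V) else 0

/-
Everything is reduced to the action `Φ ∗ f`. By (A1) a Hecke function `Φ` meets only finitely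
many cosets `gK`, which makes all sums finite, and its columns `Φ · v` lie in `ind_K^G V`;
moreover `(Φ ∗ Ψ)(g) v = (Φ ∗ (Ψ · v))(g)` and `Φ ∗ [1, v] = Φ · v`, where `[1, v]`
(`indSingle ρ v`) is the column `heckeUnit · v`. Associativity of the action is a Fubini argument over `G/K × G/K`. A
`G`-endomorphism `b` is determined by `v ↦ b [1, v]`, because every element of `ind_K^G V` is a
finite sum of right translates of the `[1, v]`; hence `b` is the action of
`Φ g v := (b [1, v])(g)`, a Hecke function since `V` is finite-dimensional.
-/

theorem finsum_comm_of_finite {α β M : Type} [AddCommMonoid M] (T : α → β → M) {s : Set α}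
    (hs : s.Finite) (hsupp : ∀ a b, T a b ≠ 0 → a ∈ s) (hT : ∀ a, (Function.support (T a)).Finite) :
    ∑ᶠ a, ∑ᶠ b, T a b = ∑ᶠ b, ∑ᶠ a, T a b := by
  have hrow : Function.support (fun a => ∑ᶠ b, T a b) ⊆ hs.toFinset := fun a ha => by
    obtain ⟨b, hb⟩ : ∃ b, T a b ≠ 0 := by
      by_contra! h
      exact ha (finsum_eq_zero_of_forall_eq_zero h)
    simpa using hsupp a b hb
  calc ∑ᶠ a, ∑ᶠ b, T a b = ∑ a ∈ hs.toFinset, ∑ᶠ b, T a b :=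
        finsum_eq_sum_of_support_subset _ hrow
    _ = ∑ᶠ b, ∑ a ∈ hs.toFinset, T a b := sum_finsum_comm _ _ fun a _ => hT a
    _ = ∑ᶠ b, ∑ᶠ a, T a b := finsum_congr fun b =>
        (finsum_eq_sum_of_support_subset _ fun a ha => by simpa using hsupp a b ha).symm

section CosetSum

variable {K : Subgroup G} {M : Type} {F : G → M}

theorem apply_eq_of_mk_eq (hF : ∀ (h : G) (k : K), F (h * k) = F h) {x y : G}
    (hxy : (x : G ⧸ K) = y) : F x = F y := by
  rw [← hF x ⟨x⁻¹ * y, QuotientGroup.eq.mp hxy⟩, mul_inv_cancel_left]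

theorem finsum_comp_section [AddCommMonoid M] (hF : ∀ (h : G) (k : K), F (h * k) = F h)
    (rep : G ⧸ K → G)
    (hrep : ∀ q : G ⧸ K, QuotientGroup.mk (rep q) = q) :
    ∑ᶠ q : G ⧸ K, F (rep q) = ∑ᶠ q : G ⧸ K, F (Quotient.out q) :=
  finsum_congr fun q => apply_eq_of_mk_eq hF (by rw [hrep, QuotientGroup.out_eq'])

theorem finsum_out_mul_left [AddCommMonoid M] (hF : ∀ (h : G) (k : K), F (h * k) = F h) (a : G) :
    ∑ᶠ q : G ⧸ K, F (a * Quotient.out q) = ∑ᶠ q : G ⧸ K, F (Quotient.out q) :=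
  calc ∑ᶠ q : G ⧸ K, F (a * Quotient.out q)
      = ∑ᶠ q : G ⧸ K, F (Quotient.out (MulAction.toPerm a q : G ⧸ K)) := finsum_congr fun q =>
        apply_eq_of_mk_eq hF (by
          rw [MulAction.toPerm_apply, QuotientGroup.out_eq']
          exact congrArg (a • ·) (QuotientGroup.out_eq' q))
    _ = ∑ᶠ q : G ⧸ K, F (Quotient.out q) :=
        finsum_comp_equiv (MulAction.toPerm a) (f := fun q : G ⧸ K => F (Quotient.out q))

theorem finsum_out_eq_of_support_subset_coset [AddCommMonoid M]
    (hF : ∀ (h : G) (k : K), F (h * k) = F h) (a : G)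
    (hsupp : ∀ h, F h ≠ 0 → (h : G ⧸ K) = a) :
    ∑ᶠ q : G ⧸ K, F (Quotient.out q) = F a := by
  rw [finsum_eq_single _ (a : G ⧸ K) fun q hq => by_contra fun hne => hq ?_]
  · exact apply_eq_of_mk_eq hF (QuotientGroup.out_eq' _)
  · rw [← hsupp _ hne, QuotientGroup.out_eq']

end CosetSum

/-- Condition (A1). -/
def IsHeckePair (K : Subgroup G) : Prop :=
  ∀ g : G, ∃ S : Finset G, ∀ x : G,
    (∃ k ∈ K, ∃ k' ∈ K, x = k * g * k') → ∃ s ∈ S, ∃ k ∈ K, x = k * s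

theorem IsHeckePair.exists_finset {K : Subgroup G} (hK : IsHeckePair K) (S₀ : Finset G) :
    ∃ S : Finset G, ∀ x : G,
      (∃ s₀ ∈ S₀, ∃ k ∈ K, ∃ k' ∈ K, x = k * s₀ * k') → ∃ s ∈ S, ∃ k ∈ K, x = k * s := by
  choose A hA using hK
  refine ⟨S₀.biUnion A, fun x ⟨s₀, hs₀, hx⟩ => ?_⟩
  obtain ⟨s, hs, hx⟩ := hA s₀ x hx
  exact ⟨s, Finset.mem_biUnion.mpr ⟨s₀, hs₀, hs⟩, hx⟩

def HasFiniteCosetSupport (K : Subgroup G) {M : Type} [Zero M] (F : G → M) : Prop :=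
  (QuotientGroup.mk '' Function.support F : Set (G ⧸ K)).Finite

namespace HasFiniteCosetSupport

variable {K : Subgroup G} {M M' : Type} [Zero M] [Zero M'] {F : G → M}

theorem mono (hF : HasFiniteCosetSupport K F) {F' : G → M'}
    (h : Function.support F' ⊆ Function.support F) : HasFiniteCosetSupport K F' :=
  hF.subset (Set.image_mono h)

theorem finite_support_out (hF : HasFiniteCosetSupport K F) :
    (Function.support fun q : G ⧸ K => F (Quotient.out q)).Finite :=
  hF.subset fun q hq => ⟨_, hq, QuotientGroup.out_eq' q⟩

theorem comp_mul_left (hF : HasFiniteCosetSupport K F) (a : G) :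
    HasFiniteCosetSupport K fun h => F (a * h) := by
  refine (hF.image (a⁻¹ • ·)).subset ?_
  rintro _ ⟨h, hh, rfl⟩
  exact ⟨_, ⟨a * h, hh, rfl⟩, by simp [smul_eq_mul]⟩

end HasFiniteCosetSupport

section Hecke

variable {V : Type} [AddCommGroup V] [Module C V] {K : Subgroup G} {ρ : Representation C K V}
  {Φ : G → Module.End C V}

theorem Hecke.apply_mul_left (hΦ : Φ ∈ Hecke K ρ) (k : K) (g : G) : Φ (k * g) = ρ k * Φ g := by
  simpa using hΦ.1 k 1 g

theorem Hecke.apply_mul_right (hΦ : Φ ∈ Hecke K ρ) (g : G) (k : K) : Φ (g * k) = Φ g * ρ k := by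
  simpa using hΦ.1 1 k g

theorem Hecke.exists_finset_mul_right_eq (hK : IsHeckePair K) (hΦ : Φ ∈ Hecke K ρ) :
    ∃ S : Finset G, ∀ h : G, Φ h ≠ 0 → ∀ k ∈ K, ∃ s ∈ S, ∃ k' ∈ K, h * k = k' * s := by
  obtain ⟨S₀, hS₀⟩ := hΦ.2
  obtain ⟨S, hS⟩ := hK.exists_finset S₀
  refine ⟨S, fun h hh k hk => hS _ ?_⟩
  obtain ⟨s₀, hs₀, k₁, hk₁, k₂, hk₂, rfl⟩ := hS₀ h hh
  exact ⟨s₀, hs₀, k₁, hk₁, k₂ * k, mul_mem hk₂ hk, by group⟩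

theorem Hecke.hasFiniteCosetSupport (hK : IsHeckePair K) (hΦ : Φ ∈ Hecke K ρ) :
    HasFiniteCosetSupport K Φ := by
  obtain ⟨S₀, hS₀⟩ := hΦ.2
  obtain ⟨S, hS⟩ := hK.exists_finset (S₀.image (·⁻¹))
  refine ((S.image fun s => ((s⁻¹ : G) : G ⧸ K)).finite_toSet).subset ?_
  rintro _ ⟨h, hh, rfl⟩
  obtain ⟨s₀, hs₀, k, hk, k', hk', rfl⟩ := hS₀ h hh
  obtain ⟨s, hs, k'', hk'', he⟩ := hS (k * s₀ * k')⁻¹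
    ⟨s₀⁻¹, Finset.mem_image_of_mem _ hs₀, k'⁻¹, inv_mem hk', k⁻¹, inv_mem hk, by group⟩
  refine Finset.mem_coe.mpr (Finset.mem_image.mpr ⟨s, hs, QuotientGroup.eq.mpr ?_⟩)
  rw [← inv_inv (k * s₀ * k'), he]
  simpa using inv_mem hk''

end Hecke

section Convolution

variable {V : Type} [AddCommGroup V] [Module C V] {K : Subgroup G} {ρ : Representation C K V}
  {Φ Ψ Ξ : G → Module.End C V} {f : G → V}

theorem mul_right_mem_cInd (hf : f ∈ cInd K ρ) (g : G) : (fun x => f (x * g)) ∈ cInd K ρ := by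
  obtain ⟨hf, S, hS⟩ := hf
  refine ⟨fun k x => by simp only [mul_assoc, hf], S.image (· * g⁻¹), fun x hx => ?_⟩
  obtain ⟨s, hs, k, hk, he⟩ := hS (x * g) hx
  exact ⟨s * g⁻¹, Finset.mem_image_of_mem _ hs, k, hk,
    by rw [← mul_assoc, ← he, mul_inv_cancel_right]⟩

theorem column_mem_cInd (hK : IsHeckePair K) (hΦ : Φ ∈ Hecke K ρ) (v : V) :
    (Φ · v) ∈ cInd K ρ := by
  obtain ⟨S₀, hS₀⟩ := hΦ.2
  obtain ⟨S, hS⟩ := hK.exists_finset S₀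
  exact ⟨fun k g => by simp only [Hecke.apply_mul_left hΦ, Module.End.mul_apply],
    S, fun g hg => hS g (hS₀ g fun h0 => hg (by simp only [h0, LinearMap.zero_apply]))⟩

theorem convAct_summand_mul_right (hΦ : Φ ∈ Hecke K ρ) (hf : f ∈ cInd K ρ) (g h : G) (k : K) :
    Φ (h * k) (f ((h * k)⁻¹ * g)) = Φ h (f (h⁻¹ * g)) := by
  rw [mul_inv_rev, mul_assoc, ← Subgroup.coe_inv, hf.1, Hecke.apply_mul_right hΦ,
    Module.End.mul_apply, ← Module.End.mul_apply (ρ k), ← map_mul, mul_inv_cancel, map_one,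
    Module.End.one_apply]

theorem conv_summand_mul_right (hΦ : Φ ∈ Hecke K ρ) (hΨ : Ψ ∈ Hecke K ρ) (g h : G) (k : K) :
    Φ (h * k) * Ψ ((h * k)⁻¹ * g) = Φ h * Ψ (h⁻¹ * g) := by
  rw [mul_inv_rev, mul_assoc, ← Subgroup.coe_inv, Hecke.apply_mul_left hΨ,
    Hecke.apply_mul_right hΦ, mul_assoc, ← mul_assoc (ρ k), ← map_mul, mul_inv_cancel, map_one,
    one_mul]

theorem finite_support_conv_summand (hΦ : HasFiniteCosetSupport K Φ) (Ψ : G → Module.End C V)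
    (g : G) :
    (Function.support fun q : G ⧸ K => Φ (Quotient.out q) * Ψ ((Quotient.out q)⁻¹ * g)).Finite :=
  (hΦ.mono (F' := fun h => Φ h * Ψ (h⁻¹ * g)) fun _ => left_ne_zero_of_mul).finite_support_out

theorem finite_support_convAct_summand (hΦ : HasFiniteCosetSupport K Φ) (f : G → V) (g : G) :
    (Function.support fun q : G ⧸ K => Φ (Quotient.out q) (f ((Quotient.out q)⁻¹ * g))).Finite :=
  (hΦ.mono (F' := fun h => Φ h (f (h⁻¹ * g))) fun _ hh h0 => hh (by
    simp only [h0, LinearMap.zero_apply])).finite_support_out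

theorem conv_apply_apply (hΦ : HasFiniteCosetSupport K Φ) (Ψ : G → Module.End C V) (g : G)
    (v : V) : conv K Φ Ψ g v = convAct K Φ (Ψ · v) g := by
  simpa [conv, convAct] using map_finsum (LinearMap.applyₗ (R := C) (M₂ := V) v)
    (finite_support_conv_summand hΦ Ψ g)

theorem convAct_mul_right (Φ : G → Module.End C V) (f : G → V) (g : G) :
    convAct K Φ (fun x => f (x * g)) = fun x => convAct K Φ f (x * g) := by
  funext x
  simp only [convAct, mul_assoc]

theorem conv_add_right (hΦ : HasFiniteCosetSupport K Φ) (Ψ Ξ : G → Module.End C V) :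
    conv K Φ (Ψ + Ξ) = conv K Φ Ψ + conv K Φ Ξ := by
  funext g
  simp only [conv, Pi.add_apply, mul_add]
  exact finsum_add_distrib (finite_support_conv_summand hΦ Ψ g) (finite_support_conv_summand hΦ Ξ g)

theorem conv_add_left (hΨ : HasFiniteCosetSupport K Ψ) (hΞ : HasFiniteCosetSupport K Ξ)
    (Φ : G → Module.End C V) : conv K (Ψ + Ξ) Φ = conv K Ψ Φ + conv K Ξ Φ := by
  funext g
  simp only [conv, Pi.add_apply, add_mul]
  exact finsum_add_distrib (finite_support_conv_summand hΨ Φ g) (finite_support_conv_summand hΞ Φ g)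

theorem conv_smul_left (hΦ : HasFiniteCosetSupport K Φ) (c : C) (Ψ : G → Module.End C V) :
    conv K (c • Φ) Ψ = c • conv K Φ Ψ := by
  funext g
  simp only [conv, Pi.smul_apply, smul_mul_assoc]
  exact (smul_finsum' c (finite_support_conv_summand hΦ Ψ g)).symm

theorem conv_smul_right (hΦ : HasFiniteCosetSupport K Φ) (c : C) (Ψ : G → Module.End C V) :
    conv K Φ (c • Ψ) = c • conv K Φ Ψ := by
  funext g
  simp only [conv, Pi.smul_apply, mul_smul_comm]
  exact (smul_finsum' c (finite_support_conv_summand hΦ Ψ g)).symm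

theorem convAct_add_left (hΦ : HasFiniteCosetSupport K Φ) (hΨ : HasFiniteCosetSupport K Ψ)
    (f : G → V) : convAct K (Φ + Ψ) f = convAct K Φ f + convAct K Ψ f := by
  funext g
  simp only [convAct, Pi.add_apply, LinearMap.add_apply]
  exact finsum_add_distrib (finite_support_convAct_summand hΦ f g)
    (finite_support_convAct_summand hΨ f g)

theorem convAct_add_right (hΦ : HasFiniteCosetSupport K Φ) (f f' : G → V) :
    convAct K Φ (f + f') = convAct K Φ f + convAct K Φ f' := by
  funext g
  simp only [convAct, Pi.add_apply, map_add]
  exact finsum_add_distrib (finite_support_convAct_summand hΦ f g)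
    (finite_support_convAct_summand hΦ f' g)

theorem convAct_smul_left (hΦ : HasFiniteCosetSupport K Φ) (c : C) (f : G → V) :
    convAct K (c • Φ) f = c • convAct K Φ f := by
  funext g
  simp only [convAct, Pi.smul_apply, LinearMap.smul_apply]
  exact (smul_finsum' c (finite_support_convAct_summand hΦ f g)).symm

theorem convAct_smul_right (hΦ : HasFiniteCosetSupport K Φ) (c : C) (f : G → V) :
    convAct K Φ (c • f) = c • convAct K Φ f := by
  funext g
  simp only [convAct, Pi.smul_apply, map_smul]
  exact (smul_finsum' c (finite_support_convAct_summand hΦ f g)).symm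

theorem heckeUnit_apply_of_mem {g : G} (hg : g ∈ K) : heckeUnit K ρ g = ρ ⟨g, hg⟩ := dif_pos hg

theorem heckeUnit_apply_of_notMem {g : G} (hg : g ∉ K) : heckeUnit K ρ g = 0 := dif_neg hg

theorem heckeUnit_mem_Hecke : heckeUnit K ρ ∈ Hecke K ρ := by
  refine ⟨fun k k' g => ?_, {1}, fun g hg => ?_⟩
  · by_cases hg : g ∈ K
    · rw [heckeUnit_apply_of_mem hg, heckeUnit_apply_of_mem (mul_mem (mul_mem k.2 hg) k'.2),
        ← map_mul, ← map_mul]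
      rfl
    · have hkgk' : ↑k * g * ↑k' ∉ K := by
        rwa [Subgroup.mul_mem_cancel_right _ k'.2, Subgroup.mul_mem_cancel_left _ k.2]
      rw [heckeUnit_apply_of_notMem hg, heckeUnit_apply_of_notMem hkgk', mul_zero, zero_mul]
  · have hgK : g ∈ K := by_contra fun h => hg (heckeUnit_apply_of_notMem h)
    exact ⟨1, Finset.mem_singleton_self _, g, hgK, 1, one_mem _, by simp⟩

theorem heckeUnit_column_mem_cInd (v : V) : (heckeUnit K ρ · v) ∈ cInd K ρ := by
  refine ⟨fun k g => by simp only [Hecke.apply_mul_left heckeUnit_mem_Hecke, Module.End.mul_apply],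
    {1}, fun g hg => ?_⟩
  have hgK : g ∈ K := by_contra fun h => hg (by simp only [heckeUnit_apply_of_notMem h,
    LinearMap.zero_apply])
  exact ⟨1, Finset.mem_singleton_self _, g, hgK, by simp⟩

theorem convAct_heckeUnit (hf : f ∈ cInd K ρ) : convAct K (heckeUnit K ρ) f = f := by
  funext g
  refine (finsum_out_eq_of_support_subset_coset (F := fun h => heckeUnit K ρ h (f (h⁻¹ * g)))
    (convAct_summand_mul_right heckeUnit_mem_Hecke hf g) 1 fun h hh => ?_).trans ?_
  · by_contra hne
    have hhK : h ∉ K := fun hK => hne (QuotientGroup.eq.mpr (by simpa using hK))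
    exact hh (by simp only [heckeUnit_apply_of_notMem hhK, LinearMap.zero_apply])
  · rw [heckeUnit_apply_of_mem (one_mem K)]
    show ρ 1 (f (1⁻¹ * g)) = f g
    simp

theorem convAct_column_heckeUnit (hΦ : Φ ∈ Hecke K ρ) (v : V) :
    convAct K Φ (heckeUnit K ρ · v) = (Φ · v) := by
  funext g
  refine (finsum_out_eq_of_support_subset_coset (F := fun h => Φ h (heckeUnit K ρ (h⁻¹ * g) v))
    (convAct_summand_mul_right hΦ (heckeUnit_column_mem_cInd v) g) g fun h hh => ?_).trans ?_
  · by_contra hne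
    have hhK : h⁻¹ * g ∉ K := fun hK => hne (QuotientGroup.eq.mpr hK)
    exact hh (by simp only [heckeUnit_apply_of_notMem hhK, LinearMap.zero_apply, map_zero])
  · simp only [inv_mul_cancel, heckeUnit_apply_of_mem (one_mem K)]
    show Φ g (ρ 1 v) = Φ g v
    simp

theorem exists_ne_zero_of_convAct_ne_zero {x : G} (hx : convAct K Φ f x ≠ 0) :
    ∃ h : G, Φ h ≠ 0 ∧ f (h⁻¹ * x) ≠ 0 := by
  obtain ⟨q, hq⟩ : ∃ q : G ⧸ K, Φ (Quotient.out q) (f ((Quotient.out q)⁻¹ * x)) ≠ 0 := by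
    by_contra! h
    exact hx (finsum_eq_zero_of_forall_eq_zero h)
  exact ⟨_, fun h0 => hq (by rw [h0, LinearMap.zero_apply]), fun h0 => hq (by rw [h0, map_zero])⟩

theorem convAct_mem_cInd (hK : IsHeckePair K) (hΦ : Φ ∈ Hecke K ρ) (hf : f ∈ cInd K ρ) :
    convAct K Φ f ∈ cInd K ρ := by
  refine ⟨fun k x => ?_, ?_⟩
  · calc convAct K Φ f (k * x)
        = ∑ᶠ q : G ⧸ K, Φ (k * Quotient.out q) (f ((k * Quotient.out q)⁻¹ * (k * x))) :=
          (finsum_out_mul_left (F := fun h => Φ h (f (h⁻¹ * (k * x))))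
            (convAct_summand_mul_right hΦ hf _) k).symm
      _ = ∑ᶠ q : G ⧸ K, ρ k (Φ (Quotient.out q) (f ((Quotient.out q)⁻¹ * x))) :=
          finsum_congr fun q => by
            rw [Hecke.apply_mul_left hΦ, mul_inv_rev, mul_assoc, inv_mul_cancel_left,
              Module.End.mul_apply]
      _ = ρ k (convAct K Φ f x) := (map_finsum (ρ k)
          (finite_support_convAct_summand (Hecke.hasFiniteCosetSupport hK hΦ) f x)).symm
  · obtain ⟨S, hS⟩ := Hecke.exists_finset_mul_right_eq hK hΦ
    obtain ⟨T, hT⟩ := hf.2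
    refine ⟨(S ×ˢ T).image fun p => p.1 * p.2, fun x hx => ?_⟩
    obtain ⟨h, hΦh, hfh⟩ := exists_ne_zero_of_convAct_ne_zero hx
    obtain ⟨t, ht, k, hk, hkt⟩ := hT _ hfh
    obtain ⟨s, hs, k', hk', hks⟩ := hS h hΦh k hk
    -- `x = h (h⁻¹ x) = (h k) t = k' s t`
    exact ⟨s * t, Finset.mem_image.mpr ⟨(s, t), Finset.mem_product.mpr ⟨hs, ht⟩, rfl⟩, k', hk', by
      rw [← mul_assoc, ← hks, mul_assoc, ← hkt, mul_inv_cancel_left]⟩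

theorem convAct_conv (hK : IsHeckePair K) (hΦ : Φ ∈ Hecke K ρ) (hΨ : Ψ ∈ Hecke K ρ)
    (hf : f ∈ cInd K ρ) : convAct K (conv K Φ Ψ) f = convAct K Φ (convAct K Ψ f) := by
  have hΦfin := Hecke.hasFiniteCosetSupport hK hΦ
  have hΨfin := Hecke.hasFiniteCosetSupport hK hΨ
  funext g
  let T : G ⧸ K → G ⧸ K → V := fun q r => Φ (Quotient.out q)
    (Ψ ((Quotient.out q)⁻¹ * Quotient.out r) (f ((Quotient.out r)⁻¹ * g)))
  have hrowfin : ∀ q : G ⧸ K, (Function.support fun r : G ⧸ K =>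
      Ψ ((Quotient.out q)⁻¹ * Quotient.out r) (f ((Quotient.out r)⁻¹ * g))).Finite := fun q =>
    ((hΨfin.comp_mul_left (Quotient.out q)⁻¹).mono (F' := fun h =>
      Ψ ((Quotient.out q)⁻¹ * h) (f (h⁻¹ * g))) fun h hh h0 => hh (by
        simp only [h0, LinearMap.zero_apply])).finite_support_out
  have hTfin : ∀ q, (Function.support (T q)).Finite := fun q =>
    (hrowfin q).subset fun r hr h0 => hr (by simp only [T, h0, map_zero])
  have hinner : ∀ q, Φ (Quotient.out q) (convAct K Ψ f ((Quotient.out q)⁻¹ * g)) = ∑ᶠ r, T q r :=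
    fun q => by
      rw [convAct, ← finsum_out_mul_left (F := fun h => Ψ h (f (h⁻¹ * ((Quotient.out q)⁻¹ * g))))
        (convAct_summand_mul_right hΨ hf _) (Quotient.out q)⁻¹]
      simp only [mul_inv_rev, inv_inv, mul_assoc, mul_inv_cancel_left]
      exact map_finsum (Φ (Quotient.out q)) (hrowfin q)
  calc convAct K (conv K Φ Ψ) f g = ∑ᶠ r, ∑ᶠ q, T q r :=
        finsum_congr fun r => conv_apply_apply hΦfin Ψ _ _
    _ = ∑ᶠ q, ∑ᶠ r, T q r := (finsum_comm_of_finite T hΦfin.finite_support_out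
        (fun q r hT h0 => hT (by simp only [T, h0, LinearMap.zero_apply])) hTfin).symm
    _ = convAct K Φ (convAct K Ψ f) g := finsum_congr fun q => (hinner q).symm

end Convolution

section HeckeAlgebra

variable {V : Type} [AddCommGroup V] [Module C V] {K : Subgroup G} {ρ : Representation C K V}
  {Φ Ψ Ξ : G → Module.End C V}

theorem mem_Hecke_of_column_mem_cInd [FiniteDimensional C V]
    (hright : ∀ (g : G) (k : K), Φ (g * k) = Φ g * ρ k) (hcol : ∀ v, (Φ · v) ∈ cInd K ρ) :
    Φ ∈ Hecke K ρ := by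
  refine ⟨fun k k' g => ?_, ?_⟩
  · rw [hright, show Φ (k * g) = ρ k * Φ g from LinearMap.ext fun v => (hcol v).1 k g]
  · let b := Module.finBasis C V
    choose T hT using fun i => (hcol (b i)).2
    refine ⟨Finset.univ.biUnion T, fun g hg => ?_⟩
    obtain ⟨i, hi⟩ : ∃ i, Φ g (b i) ≠ 0 := by
      by_contra! h
      exact hg (b.ext fun i => by rw [h i, LinearMap.zero_apply])
    obtain ⟨s, hs, k, hk, rfl⟩ := hT i g hi
    exact ⟨s, Finset.mem_biUnion.mpr ⟨i, Finset.mem_univ _, hs⟩, k, hk, 1, one_mem K, by simp⟩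

theorem conv_mem_Hecke [FiniteDimensional C V] (hK : IsHeckePair K) (hΦ : Φ ∈ Hecke K ρ)
    (hΨ : Ψ ∈ Hecke K ρ) : conv K Φ Ψ ∈ Hecke K ρ := by
  have hΦfin := Hecke.hasFiniteCosetSupport hK hΦ
  have hcol : ∀ v, (conv K Φ Ψ · v) = convAct K Φ (Ψ · v) := fun v =>
    funext fun g => conv_apply_apply hΦfin Ψ g v
  refine mem_Hecke_of_column_mem_cInd (fun g k => LinearMap.ext fun v => ?_)
    fun v => hcol v ▸ convAct_mem_cInd hK hΦ (column_mem_cInd hK hΨ v)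
  have hΨcol : (fun x => Ψ (x * k) v) = (Ψ · (ρ k v)) :=
    funext fun x => by rw [Hecke.apply_mul_right hΨ, Module.End.mul_apply]
  rw [Module.End.mul_apply, conv_apply_apply hΦfin, conv_apply_apply hΦfin, ← hΨcol]
  exact (congrFun (convAct_mul_right Φ (Ψ · v) k) g).symm

theorem heckeUnit_conv (hK : IsHeckePair K) (hΦ : Φ ∈ Hecke K ρ) :
    conv K (heckeUnit K ρ) Φ = Φ := by
  ext g v
  rw [conv_apply_apply (Hecke.hasFiniteCosetSupport hK heckeUnit_mem_Hecke),
    convAct_heckeUnit (column_mem_cInd hK hΦ v)]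

theorem conv_heckeUnit (hK : IsHeckePair K) (hΦ : Φ ∈ Hecke K ρ) :
    conv K Φ (heckeUnit K ρ) = Φ := by
  ext g v
  rw [conv_apply_apply (Hecke.hasFiniteCosetSupport hK hΦ), convAct_column_heckeUnit hΦ]

theorem conv_assoc [FiniteDimensional C V] (hK : IsHeckePair K) (hΦ : Φ ∈ Hecke K ρ)
    (hΨ : Ψ ∈ Hecke K ρ) (hΞ : Ξ ∈ Hecke K ρ) :
    conv K (conv K Φ Ψ) Ξ = conv K Φ (conv K Ψ Ξ) := by
  ext g v
  have hcol : (conv K Ψ Ξ · v) = convAct K Ψ (Ξ · v) :=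
    funext fun x => conv_apply_apply (Hecke.hasFiniteCosetSupport hK hΨ) Ξ x v
  rw [conv_apply_apply (Hecke.hasFiniteCosetSupport hK (conv_mem_Hecke hK hΦ hΨ)),
    conv_apply_apply (Hecke.hasFiniteCosetSupport hK hΦ), hcol,
    convAct_conv hK hΦ hΨ (column_mem_cInd hK hΞ v)]

theorem Hecke.ext_of_convAct (hΦ : Φ ∈ Hecke K ρ) (hΨ : Ψ ∈ Hecke K ρ)
    (h : ∀ f ∈ cInd K ρ, convAct K Φ f = convAct K Ψ f) : Φ = Ψ := by
  ext g v
  have := congrFun (h _ (heckeUnit_column_mem_cInd v)) g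
  rwa [convAct_column_heckeUnit hΦ, convAct_column_heckeUnit hΨ] at this

end HeckeAlgebra

section Endomorphisms

variable {V : Type} [AddCommGroup V] [Module C V] {K : Subgroup G} {ρ : Representation C K V}
  {Φ : G → Module.End C V} {f : G → V}

def CommutesWithTranslations (b : cInd K ρ →ₗ[C] cInd K ρ) : Prop :=
  ∀ (g : G) (f f' : cInd K ρ), ((f' : G → V) = fun x => (f : G → V) (x * g)) →
    ((b f' : G → V) = fun x => (b f : G → V) (x * g))

variable (ρ) in
def indSingle : V →ₗ[C] cInd K ρ :=
  LinearMap.codRestrict (cInd K ρ) (LinearMap.pi fun g => heckeUnit K ρ g) heckeUnit_column_mem_cInd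

@[simp]
theorem coe_indSingle (v : V) : (indSingle ρ v : G → V) = (heckeUnit K ρ · v) := rfl

def heckeAct (hK : IsHeckePair K) (hΦ : Φ ∈ Hecke K ρ) : cInd K ρ →ₗ[C] cInd K ρ where
  toFun f := ⟨convAct K Φ f, convAct_mem_cInd hK hΦ f.2⟩
  map_add' f f' := Subtype.ext (convAct_add_right (Hecke.hasFiniteCosetSupport hK hΦ) f f')
  map_smul' c f := Subtype.ext (convAct_smul_right (Hecke.hasFiniteCosetSupport hK hΦ) c f)

theorem heckeAct_commutesWithTranslations (hK : IsHeckePair K) (hΦ : Φ ∈ Hecke K ρ) :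
    CommutesWithTranslations (heckeAct hK hΦ) := by
  intro g f f' hf'
  show convAct K Φ f' = fun x => convAct K Φ f (x * g)
  rw [hf', convAct_mul_right]

theorem support_sub_translate_indSingle (hf : f ∈ cInd K ρ) {s : G} {S : Finset G}
    (hS : ∀ x, f x ≠ 0 → ∃ s' ∈ insert s S, ∃ k ∈ K, x = k * s') (x : G)
    (hx : f x - heckeUnit K ρ (x * s⁻¹) (f s) ≠ 0) : ∃ s' ∈ S, ∃ k ∈ K, x = k * s' := by
  by_cases hxs : x * s⁻¹ ∈ K
  · refine absurd ?_ hx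
    rw [heckeUnit_apply_of_mem hxs, ← hf.1 ⟨_, hxs⟩, inv_mul_cancel_right, sub_self]
  · rw [heckeUnit_apply_of_notMem hxs, LinearMap.zero_apply, sub_zero] at hx
    obtain ⟨s', hs', k, hk, rfl⟩ := hS x hx
    rcases Finset.mem_insert.mp hs' with rfl | hs'
    · exact absurd (by simpa using hk) hxs
    · exact ⟨s', hs', k, hk, rfl⟩

theorem eq_of_comp_indSingle_eq (A B : cInd K ρ →ₗ[C] cInd K ρ) (hA : CommutesWithTranslations A)
    (hB : CommutesWithTranslations B) (h : A ∘ₗ indSingle ρ = B ∘ₗ indSingle ρ) : A = B := by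
  suffices ∀ (S : Finset G) (f : cInd K ρ),
      (∀ x, (f : G → V) x ≠ 0 → ∃ s ∈ S, ∃ k ∈ K, x = k * s) → A f = B f from
    LinearMap.ext fun f => this _ f f.2.2.choose_spec
  intro S
  induction S using Finset.induction_on with
  | empty =>
    intro f hf
    obtain rfl : f = 0 := Subtype.ext (funext fun x => by_contra fun hx => by simpa using hf x hx)
    simp
  | insert s S _ ih =>
    intro f hf
    let τ : cInd K ρ := ⟨fun x => (indSingle ρ ((f : G → V) s) : G → V) (x * s⁻¹),
      mul_right_mem_cInd (indSingle ρ _).2 _⟩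
    have hτ : A τ = B τ := by
      have hs := LinearMap.congr_fun h ((f : G → V) s)
      simp only [LinearMap.comp_apply] at hs
      exact Subtype.ext (by rw [hA s⁻¹ (indSingle ρ _) τ rfl, hB s⁻¹ (indSingle ρ _) τ rfl, hs])
    have hrest : A (f - τ) = B (f - τ) := ih _ (support_sub_translate_indSingle f.2 hf)
    simpa using congrArg₂ (· + ·) hrest hτ

theorem exists_mem_Hecke_convAct_eq [FiniteDimensional C V] (hK : IsHeckePair K)
    (b : cInd K ρ →ₗ[C] cInd K ρ) (hb : CommutesWithTranslations b) :
    ∃ Φ ∈ Hecke K ρ, ∀ f : cInd K ρ, (b f : G → V) = convAct K Φ f := by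
  let Φ : G → Module.End C V := fun g =>
    LinearMap.proj g ∘ₗ (cInd K ρ).subtype ∘ₗ b ∘ₗ indSingle ρ
  have hcol : ∀ v, (Φ · v) = b (indSingle ρ v) := fun v => rfl
  have hΦ : Φ ∈ Hecke K ρ := by
    refine mem_Hecke_of_column_mem_cInd (fun g k => LinearMap.ext fun v => ?_)
      fun v => hcol v ▸ (b _).2
    have htrans := hb k (indSingle ρ v) (indSingle ρ (ρ k v)) (funext fun x => by
      simp [Hecke.apply_mul_right heckeUnit_mem_Hecke])
    exact (congrFun htrans g).symm
  refine ⟨Φ, hΦ, fun f => congrArg Subtype.val (LinearMap.congr_fun (eq_of_comp_indSingle_eq b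
    (heckeAct hK hΦ) hb (heckeAct_commutesWithTranslations hK hΦ) ?_) f)⟩
  ext v : 1
  exact Subtype.ext (convAct_column_heckeUnit hΦ v).symm

end Endomorphisms

theorem statement3 {V : Type} [AddCommGroup V] [Module C V] [FiniteDimensional C V]
    (K : Subgroup G)
    (hA1 : ∀ g : G, ∃ S : Finset G, ∀ x : G,
      (∃ k ∈ K, ∃ k' ∈ K, x = k * g * k') → ∃ s ∈ S, ∃ k ∈ K, x = k * s)
    (ρ : Representation C ↥K V) :
    -- the convolution sums have finite support ...
    (∀ Φ ∈ Hecke K ρ, ∀ Ψ ∈ Hecke K ρ, ∀ g : G,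
      {q : G ⧸ K | Φ (Quotient.out q) * Ψ ((Quotient.out q)⁻¹ * g) ≠ 0}.Finite) ∧
    (∀ Φ ∈ Hecke K ρ, ∀ f ∈ cInd K ρ, ∀ g : G,
      {q : G ⧸ K | Φ (Quotient.out q) (f ((Quotient.out q)⁻¹ * g)) ≠ 0}.Finite) ∧
    -- ... and do not depend on the choice of coset representatives
    (∀ Φ ∈ Hecke K ρ, ∀ Ψ ∈ Hecke K ρ, ∀ g : G, ∀ rep : G ⧸ K → G,
      (∀ q : G ⧸ K, QuotientGroup.mk (rep q) = q) →
      ∑ᶠ q : G ⧸ K, Φ (rep q) * Ψ ((rep q)⁻¹ * g) = conv K Φ Ψ g) ∧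
    (∀ Φ ∈ Hecke K ρ, ∀ f ∈ cInd K ρ, ∀ g : G, ∀ rep : G ⧸ K → G,
      (∀ q : G ⧸ K, QuotientGroup.mk (rep q) = q) →
      ∑ᶠ q : G ⧸ K, Φ (rep q) (f ((rep q)⁻¹ * g)) = convAct K Φ f g) ∧
    -- H(G,K,V) is stable under convolution
    (∀ Φ ∈ Hecke K ρ, ∀ Ψ ∈ Hecke K ρ, conv K Φ Ψ ∈ Hecke K ρ) ∧
    -- it is a unital ...
    heckeUnit K ρ ∈ Hecke K ρ ∧
    (∀ Φ ∈ Hecke K ρ, conv K (heckeUnit K ρ) Φ = Φ ∧ conv K Φ (heckeUnit K ρ) = Φ) ∧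
    -- ... associative ...
    (∀ Φ ∈ Hecke K ρ, ∀ Ψ ∈ Hecke K ρ, ∀ Ξ ∈ Hecke K ρ,
      conv K (conv K Φ Ψ) Ξ = conv K Φ (conv K Ψ Ξ)) ∧
    -- ... C-algebra: convolution is C-bilinear
    (∀ Φ ∈ Hecke K ρ, ∀ Ψ ∈ Hecke K ρ, ∀ Ξ ∈ Hecke K ρ,
      conv K Φ (Ψ + Ξ) = conv K Φ Ψ + conv K Φ Ξ ∧
      conv K (Ψ + Ξ) Φ = conv K Ψ Φ + conv K Ξ Φ) ∧
    (∀ c : C, ∀ Φ ∈ Hecke K ρ, ∀ Ψ ∈ Hecke K ρ,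
      conv K (c • Φ) Ψ = c • conv K Φ Ψ ∧ conv K Φ (c • Ψ) = c • conv K Φ Ψ) ∧
    -- Φ∗f again lies in ind_K^G V
    (∀ Φ ∈ Hecke K ρ, ∀ f ∈ cInd K ρ, convAct K Φ f ∈ cInd K ρ) ∧
    -- Φ ↦ (f ↦ Φ∗f) is multiplicative, unital, C-linear in Φ,
    (∀ Φ ∈ Hecke K ρ, ∀ Ψ ∈ Hecke K ρ, ∀ f ∈ cInd K ρ,
      convAct K (conv K Φ Ψ) f = convAct K Φ (convAct K Ψ f)) ∧
    (∀ f ∈ cInd K ρ, convAct K (heckeUnit K ρ) f = f) ∧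
    (∀ Φ ∈ Hecke K ρ, ∀ Ψ ∈ Hecke K ρ, ∀ f ∈ cInd K ρ,
      convAct K (Φ + Ψ) f = convAct K Φ f + convAct K Ψ f) ∧
    (∀ c : C, ∀ Φ ∈ Hecke K ρ, ∀ f ∈ cInd K ρ, convAct K (c • Φ) f = c • convAct K Φ f) ∧
    -- each Φ acts as a C-linear G-equivariant endomorphism of ind_K^G V
    (∀ Φ ∈ Hecke K ρ, ∀ f ∈ cInd K ρ, ∀ f' ∈ cInd K ρ,
      convAct K Φ (f + f') = convAct K Φ f + convAct K Φ f') ∧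
    (∀ Φ ∈ Hecke K ρ, ∀ c : C, ∀ f ∈ cInd K ρ, convAct K Φ (c • f) = c • convAct K Φ f) ∧
    (∀ Φ ∈ Hecke K ρ, ∀ f ∈ cInd K ρ, ∀ g : G,
      convAct K Φ (fun x => f (x * g)) = fun x => convAct K Φ f (x * g)) ∧
    -- Φ ↦ (f ↦ Φ∗f) is injective on H(G,K,V) ...
    (∀ Φ ∈ Hecke K ρ, ∀ Ψ ∈ Hecke K ρ,
      (∀ f ∈ cInd K ρ, convAct K Φ f = convAct K Ψ f) → Φ = Ψ) ∧
    -- ... and surjects onto End_{C[G]}(ind_K^G V)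
    (∀ bEnd : ↥(cInd K ρ) →ₗ[C] ↥(cInd K ρ),
      (∀ (g : G) (f f' : ↥(cInd K ρ)),
        ((f' : G → V) = fun x => (f : G → V) (x * g)) →
        ((bEnd f' : G → V) = fun x => (bEnd f : G → V) (x * g))) →
      ∃ Φ ∈ Hecke K ρ, ∀ f : ↥(cInd K ρ), (bEnd f : G → V) = convAct K Φ ↑f) := by
  have fin : ∀ Φ ∈ Hecke K ρ, HasFiniteCosetSupport K Φ := fun Φ hΦ =>
    Hecke.hasFiniteCosetSupport hA1 hΦ
  exact ⟨fun Φ hΦ Ψ _ g => finite_support_conv_summand (fin Φ hΦ) Ψ g,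
    fun Φ hΦ f _ g => finite_support_convAct_summand (fin Φ hΦ) f g,
    fun Φ hΦ Ψ hΨ g rep hrep => finsum_comp_section (F := fun h => Φ h * Ψ (h⁻¹ * g))
      (conv_summand_mul_right hΦ hΨ g) rep hrep,
    fun Φ hΦ f hf g rep hrep => finsum_comp_section (F := fun h => Φ h (f (h⁻¹ * g)))
      (convAct_summand_mul_right hΦ hf g) rep hrep,
    fun _ hΦ _ hΨ => conv_mem_Hecke hA1 hΦ hΨ,
    heckeUnit_mem_Hecke,
    fun _ hΦ => ⟨heckeUnit_conv hA1 hΦ, conv_heckeUnit hA1 hΦ⟩,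
    fun _ hΦ _ hΨ _ hΞ => conv_assoc hA1 hΦ hΨ hΞ,
    fun Φ hΦ Ψ hΨ Ξ hΞ => ⟨conv_add_right (fin Φ hΦ) Ψ Ξ, conv_add_left (fin Ψ hΨ) (fin Ξ hΞ) Φ⟩,
    fun c Φ hΦ Ψ _ => ⟨conv_smul_left (fin Φ hΦ) c Ψ, conv_smul_right (fin Φ hΦ) c Ψ⟩,
    fun _ hΦ _ hf => convAct_mem_cInd hA1 hΦ hf,
    fun _ hΦ _ hΨ _ hf => convAct_conv hA1 hΦ hΨ hf,
    fun _ hf => convAct_heckeUnit hf,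
    fun Φ hΦ Ψ hΨ f _ => convAct_add_left (fin Φ hΦ) (fin Ψ hΨ) f,
    fun c Φ hΦ f _ => convAct_smul_left (fin Φ hΦ) c f,
    fun Φ hΦ f _ f' _ => convAct_add_right (fin Φ hΦ) f f',
    fun Φ hΦ c f _ => convAct_smul_right (fin Φ hΦ) c f,
    fun Φ _ f _ g => convAct_mul_right Φ f g,
    fun _ hΦ _ hΨ h => Hecke.ext_of_convAct hΦ hΨ h,
    fun b hb => exists_mem_Hecke_convAct_eq hA1 b hb⟩

end Paper
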